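/- For every ε > 0 there exists N such that every tournament T on n ≥ N vertices satisfies c4(T) ≥ 6·c3(T)² − ε, where c3(T) is the fraction of 3-element vertex subsets spanning a cyclic triangle and c4(T) is the fraction of 4-element vertex subsets whose induced subtournament contains a directed 4-cycle. -/

import Mathlib

open Finset

/-- A tournament on `Fin n`: an orientation of the complete graph, i.e. no loops and
for all distinct `x, y` exactly one of `r x y`, `r y x` holds. -/
def IsTournament {n : ℕ} (r : Fin n → Fin n → Prop) : Prop :=
  (∀ x, ¬ r x x) ∧ ∀ x y : Fin n, x ≠ y → ((r x y ∧ ¬ r y x) ∨ (r y x ∧ ¬ r x y))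

/-- `s` spans a cyclic triangle: `s = {x,y,z}` with `x→y→z→x`. -/
def IsCyclicTriple {n : ℕ} (r : Fin n → Fin n → Prop) (s : Finset (Fin n)) : Prop :=
  ∃ x y z : Fin n, x ≠ y ∧ y ≠ z ∧ x ≠ z ∧ s = {x, y, z} ∧ r x y ∧ r y z ∧ r z x

/-- `s` spans a transitive triple. -/
def IsTransTriple {n : ℕ} (r : Fin n → Fin n → Prop) (s : Finset (Fin n)) : Prop :=
  ∃ x y z : Fin n, x ≠ y ∧ y ≠ z ∧ x ≠ z ∧ s = {x, y, z} ∧ r x y ∧ r y z ∧ r x z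

/-- `s` contains a directed 4-cycle through all of its (four) elements. -/
def HasCycle4 {n : ℕ} (r : Fin n → Fin n → Prop) (s : Finset (Fin n)) : Prop :=
  ∃ a b c d : Fin n, a ≠ b ∧ a ≠ c ∧ a ≠ d ∧ b ≠ c ∧ b ≠ d ∧ c ≠ d ∧
    s = {a, b, c, d} ∧ r a b ∧ r b c ∧ r c d ∧ r d a

/-- `s` spans a transitive 4-vertex subtournament. -/
def IsTrans4 {n : ℕ} (r : Fin n → Fin n → Prop) (s : Finset (Fin n)) : Prop :=
  ∃ a b c d : Fin n, a ≠ b ∧ a ≠ c ∧ a ≠ d ∧ b ≠ c ∧ b ≠ d ∧ c ≠ d ∧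
    s = {a, b, c, d} ∧ r a b ∧ r a c ∧ r a d ∧ r b c ∧ r b d ∧ r c d

open Classical in
/-- `C3(T)`: number of 3-element vertex subsets spanning a cyclic triangle. -/
noncomputable def cyc3Count {n : ℕ} (r : Fin n → Fin n → Prop) : ℕ :=
  ((univ.powersetCard 3).filter (fun s => IsCyclicTriple r s)).card

open Classical in
/-- `T3(T)`: number of 3-element vertex subsets spanning a transitive triple. -/
noncomputable def trans3Count {n : ℕ} (r : Fin n → Fin n → Prop) : ℕ :=
  ((univ.powersetCard 3).filter (fun s => IsTransTriple r s)).card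

open Classical in
/-- `C4(T)`: number of 4-element vertex subsets containing a directed 4-cycle. -/
noncomputable def cyc4Count {n : ℕ} (r : Fin n → Fin n → Prop) : ℕ :=
  ((univ.powersetCard 4).filter (fun s => HasCycle4 r s)).card

open Classical in
/-- `T4(T)`: number of 4-element vertex subsets spanning a transitive subtournament. -/
noncomputable def trans4Count {n : ℕ} (r : Fin n → Fin n → Prop) : ℕ :=
  ((univ.powersetCard 4).filter (fun s => IsTrans4 r s)).card


/-!
For an arc `u → v` call `w` an apex if `u → v → w → u`, and let `d(u, v)` be the number of
apexes. Summing over arcs, `Σ d ≥ 3·C3`. An arc together with an ordered pair of distinct apexes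
`w, w'` spans a directed 4-cycle (`u → v → w → w' → u`, or with `w, w'` swapped), and a 4-set
arises in this way from at most two such configurations, so `Σ d(d - 1) ≤ 2·C4`. Cauchy–Schwarz
over the at most `C(n, 2)` arcs gives `9·C3² ≤ (Σ d)² ≤ C(n, 2)·(2·C4 + Σ d)`, and the error term
`Σ d ≤ C(n, 2)·n` contributes only `O(1/n)` after normalising by `C(n, 3)²` and `C(n, 4)`.
-/

variable {n : ℕ} {r : Fin n → Fin n → Prop}

namespace IsTournament

lemma asymm (hr : IsTournament r) {a b : Fin n} (h : r a b) : ¬ r b a := by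
  intro h'
  rcases hr.2 a b fun e => hr.1 a (e ▸ h) with ⟨-, h₂⟩ | ⟨-, h₂⟩
  exacts [h₂ h', h₂ h]

lemma ne_of_rel (hr : IsTournament r) {a b : Fin n} (h : r a b) : a ≠ b :=
  fun e => hr.1 a (e ▸ h)

lemma rel_or_rel (hr : IsTournament r) {a b : Fin n} (h : a ≠ b) : r a b ∨ r b a :=
  (hr.2 a b h).imp And.left And.left

end IsTournament

open Classical in
noncomputable def arcs (r : Fin n → Fin n → Prop) : Finset (Fin n × Fin n) :=
  univ.filter fun p => r p.1 p.2

open Classical in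
noncomputable def cyclicApexes (r : Fin n → Fin n → Prop) (p : Fin n × Fin n) : Finset (Fin n) :=
  univ.filter fun w => r p.2 w ∧ r w p.1

@[simp]
lemma mem_arcs {p : Fin n × Fin n} : p ∈ arcs r ↔ r p.1 p.2 := by
  simp [arcs]

@[simp]
lemma mem_cyclicApexes {p : Fin n × Fin n} {w : Fin n} :
    w ∈ cyclicApexes r p ↔ r p.2 w ∧ r w p.1 := by
  simp [cyclicApexes]

lemma card_arcs_le (hr : IsTournament r) : #(arcs r) ≤ n.choose 2 := by
  classical
  calc #(arcs r) ≤ #((univ : Finset (Fin n)).powersetCard 2) := by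
        refine card_le_card_of_injOn (fun p => {p.1, p.2}) (fun p hp => ?_) ?_
        · exact mem_powersetCard.2 ⟨subset_univ _, card_pair (hr.ne_of_rel (mem_arcs.1 hp))⟩
        · rintro ⟨a, b⟩ hab ⟨c, d⟩ hcd h
          rw [mem_coe, mem_arcs] at hab hcd
          have h' : ({a, b} : Set (Fin n)) = {c, d} := by
            simpa using congrArg ((↑) : Finset (Fin n) → Set (Fin n)) h
          rcases Set.pair_eq_pair_iff.1 h' with ⟨rfl, rfl⟩ | ⟨rfl, rfl⟩
          · rfl
          · exact absurd hcd (hr.asymm hab)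
    _ = n.choose 2 := by simp

lemma three_mul_cyc3Count_le :
    3 * cyc3Count r ≤ ∑ p ∈ arcs r, #(cyclicApexes r p) := by
  classical
  rw [← card_sigma, mul_comm, ← mul_one #((arcs r).sigma _)]
  refine card_mul_le_card_mul
    (fun (s : Finset (Fin n)) (t : (_ : Fin n × Fin n) × Fin n) => s = {t.1.1, t.1.2, t.2})
    (fun s hs => ?_) (fun t _ => card_le_one.2 fun s hs s' hs' => ?_)
  · obtain ⟨x, y, z, hxy, hyz, hxz, rfl, h₁, h₂, h₃⟩ := (mem_filter.1 hs).2
    set rotations : Finset ((_ : Fin n × Fin n) × Fin n) := {⟨(x, y), z⟩, ⟨(y, z), x⟩, ⟨(z, x), y⟩}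
    have hcard : #rotations = 3 := by
      refine card_eq_three.2 ⟨_, _, _, ?_, ?_, ?_, rfl⟩ <;> simp [hxy, hyz, hxz, hxz.symm]
    refine hcard.ge.trans (card_le_card fun t ht => ?_)
    simp only [rotations, mem_insert, mem_singleton] at ht
    rcases ht with rfl | rfl | rfl <;>
      simp only [mem_bipartiteAbove, mem_sigma, mem_arcs, mem_cyclicApexes, Finset.ext_iff,
        mem_insert, mem_singleton] <;> tauto
  · rw [mem_bipartiteBelow] at hs hs'
    exact hs.2.trans hs'.2.symm

open Classical in
noncomputable def apexPairs (r : Fin n → Fin n → Prop) :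
    Finset ((_ : Fin n × Fin n) × Fin n × Fin n) :=
  (arcs r).sigma fun p => (cyclicApexes r p).offDiag

def apexPairVertices (q : (_ : Fin n × Fin n) × Fin n × Fin n) : Finset (Fin n) :=
  {q.1.1, q.1.2, q.2.1, q.2.2}

lemma mem_apexPairs {u v w w' : Fin n} :
    ⟨(u, v), (w, w')⟩ ∈ apexPairs r ↔
      r u v ∧ (r v w ∧ r w u) ∧ (r v w' ∧ r w' u) ∧ w ≠ w' := by
  simp [apexPairs]

lemma card_apexPairs : #(apexPairs r) = ∑ p ∈ arcs r, #(cyclicApexes r p).offDiag :=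
  card_sigma _ _

lemma card_apexPairVertices (hr : IsTournament r) {q} (hq : q ∈ apexPairs r) :
    #(apexPairVertices q) = 4 := by
  obtain ⟨⟨u, v⟩, w, w'⟩ := q
  obtain ⟨huv, ⟨hvw, hwu⟩, ⟨hvw', hw'u⟩, hww'⟩ := mem_apexPairs.1 hq
  exact card_eq_four.2 ⟨u, v, w, w', hr.ne_of_rel huv, (hr.ne_of_rel hwu).symm,
    (hr.ne_of_rel hw'u).symm, hr.ne_of_rel hvw, hr.ne_of_rel hvw', hww', rfl⟩

lemma hasCycle4_apexPairVertices (hr : IsTournament r) {q} (hq : q ∈ apexPairs r) :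
    HasCycle4 r (apexPairVertices q) := by
  obtain ⟨⟨u, v⟩, w, w'⟩ := q
  obtain ⟨huv, ⟨hvw, hwu⟩, ⟨hvw', hw'u⟩, hww'⟩ := mem_apexPairs.1 hq
  have huv₀ := hr.ne_of_rel huv
  have hwu₀ := hr.ne_of_rel hwu
  have hw'u₀ := hr.ne_of_rel hw'u
  have hvw₀ := hr.ne_of_rel hvw
  have hvw'₀ := hr.ne_of_rel hvw'
  rcases hr.rel_or_rel hww' with h | h
  · exact ⟨u, v, w, w', huv₀, hwu₀.symm, hw'u₀.symm, hvw₀, hvw'₀, hww', rfl, huv, hvw, h, hw'u⟩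
  · refine ⟨u, v, w', w, huv₀, hw'u₀.symm, hwu₀.symm, hvw'₀, hvw₀, hww'.symm, ?_, huv, hvw', h,
      hwu⟩
    simp only [apexPairVertices, pair_comm]

lemma eq_of_rel_of_mem_insert (hr : IsTournament r) {u v w w' y : Fin n} (hwu : r w u)
    (hw'u : r w' u) (hy : y ∈ ({u, v, w, w'} : Finset (Fin n))) (huy : r u y) : y = v := by
  simp only [mem_insert, mem_singleton] at hy
  rcases hy with rfl | rfl | rfl | rfl
  · exact absurd huy (hr.1 _)
  · rfl
  · exact absurd huy (hr.asymm hwu)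
  · exact absurd huy (hr.asymm hw'u)

lemma eq_of_rel_of_mem_insert' (hr : IsTournament r) {u v w w' y : Fin n} (hvw : r v w)
    (hvw' : r v w') (hy : y ∈ ({u, v, w, w'} : Finset (Fin n))) (hyv : r y v) : y = u := by
  simp only [mem_insert, mem_singleton] at hy
  rcases hy with rfl | rfl | rfl | rfl
  · rfl
  · exact absurd hyv (hr.1 _)
  · exact absurd hyv (hr.asymm hvw)
  · exact absurd hyv (hr.asymm hvw')

/-- Within the common vertex set, `v` is the only out-neighbour of `u` and `u` the only
in-neighbour of `v`; an arc `x → y` with the same two properties must be `u → v`. -/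
lemma fst_eq_of_apexPairVertices_eq (hr : IsTournament r) {q q'} (hq : q ∈ apexPairs r)
    (hq' : q' ∈ apexPairs r) (h : apexPairVertices q' = apexPairVertices q) : q'.1 = q.1 := by
  obtain ⟨⟨u, v⟩, w, w'⟩ := q
  obtain ⟨⟨x, y⟩, z, z'⟩ := q'
  obtain ⟨huv, ⟨hvw, hwu⟩, ⟨hvw', hw'u⟩, hww'⟩ := mem_apexPairs.1 hq
  obtain ⟨hxy, ⟨hyz, hzx⟩, ⟨hyz', hz'x⟩, -⟩ := mem_apexPairs.1 hq'
  simp only [apexPairVertices] at h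
  have hout : ∀ t ∈ ({u, v, w, w'} : Finset (Fin n)), r x t → t = y := fun t ht =>
    eq_of_rel_of_mem_insert hr hzx hz'x (h ▸ ht)
  have hin : ∀ t ∈ ({u, v, w, w'} : Finset (Fin n)), r t y → t = x := fun t ht =>
    eq_of_rel_of_mem_insert' hr hyz hyz' (h ▸ ht)
  have hx : x ∈ ({u, v, w, w'} : Finset (Fin n)) := h ▸ mem_insert_self _ _
  have hxu : x = u := by
    simp only [mem_insert, mem_singleton] at hx
    rcases hx with rfl | rfl | rfl | rfl
    · rfl
    · exact absurd ((hout w (by simp) hvw).trans (hout w' (by simp) hvw').symm) hww'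
    · obtain rfl := hout u (by simp) hwu
      exact absurd (hin w' (by simp) hw'u) hww'.symm
    · obtain rfl := hout u (by simp) hw'u
      exact absurd (hin w (by simp) hwu) hww'
  subst hxu
  rw [hout v (by simp) huv]

lemma card_filter_apexPairVertices_eq_le_two (hr : IsTournament r) {q}
    (hq : q ∈ apexPairs r) :
    #{q' ∈ apexPairs r | apexPairVertices q' = apexPairVertices q} ≤ 2 := by
  obtain ⟨⟨u, v⟩, w, w'⟩ := q
  refine (card_le_card (t := {⟨(u, v), (w, w')⟩, ⟨(u, v), (w', w)⟩}) fun q' hq'S => ?_).trans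
    card_le_two
  obtain ⟨hq', h⟩ := mem_filter.1 hq'S
  have hfst := fst_eq_of_apexPairVertices_eq hr hq hq' h
  obtain ⟨⟨x, y⟩, z, z'⟩ := q'
  obtain ⟨rfl, rfl⟩ := Prod.mk.inj hfst
  obtain ⟨-, ⟨hvz, hzu⟩, ⟨hvz', hz'u⟩, hzz'⟩ := mem_apexPairs.1 hq'
  have hS : ∀ t ∈ ({x, y, z, z'} : Finset (Fin n)), t ≠ x → t ≠ y → t = w ∨ t = w' := by
    intro t ht htx hty
    simp only [apexPairVertices] at h
    rw [h] at ht
    simpa [htx, hty] using ht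
  rcases hS z (by simp) (hr.ne_of_rel hzu) (hr.ne_of_rel hvz).symm with rfl | rfl <;>
    rcases hS z' (by simp) (hr.ne_of_rel hz'u) (hr.ne_of_rel hvz').symm with rfl | rfl <;>
    simp_all

lemma card_apexPairs_le (hr : IsTournament r) : #(apexPairs r) ≤ 2 * cyc4Count r := by
  classical
  rw [mul_comm, ← mul_one #(apexPairs r)]
  refine card_mul_le_card_mul (fun q S => apexPairVertices q = S) (fun q hq => ?_) (fun S _ => ?_)
  · refine card_pos.2 ⟨apexPairVertices q, (mem_bipartiteAbove _).2 ⟨mem_filter.2 ⟨?_, ?_⟩, rfl⟩⟩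
    · exact mem_powersetCard.2 ⟨subset_univ _, card_apexPairVertices hr hq⟩
    · exact hasCycle4_apexPairVertices hr hq
  · rcases (bipartiteBelow (fun q S => apexPairVertices q = S) (apexPairs r) S).eq_empty_or_nonempty
      with hS | ⟨q, hqS⟩
    · rw [hS, card_empty]; omega
    · obtain ⟨hq, rfl⟩ := (mem_bipartiteBelow _).1 hqS
      exact card_filter_apexPairVertices_eq_le_two hr hq

lemma sq_sum_card_cyclicApexes_le (hr : IsTournament r) :
    (∑ p ∈ arcs r, #(cyclicApexes r p)) ^ 2 ≤
      n.choose 2 * (2 * cyc4Count r + n.choose 2 * n) := by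
  have hsum : ∑ p ∈ arcs r, #(cyclicApexes r p) ≤ n.choose 2 * n :=
    (sum_le_card_nsmul _ _ n fun _ _ => (card_le_univ _).trans_eq (Fintype.card_fin n)).trans
      (Nat.mul_le_mul_right n (card_arcs_le hr))
  calc (∑ p ∈ arcs r, #(cyclicApexes r p)) ^ 2
      ≤ #(arcs r) * ∑ p ∈ arcs r, #(cyclicApexes r p) ^ 2 := sq_sum_le_card_mul_sum_sq
    _ = #(arcs r) * (#(apexPairs r) + ∑ p ∈ arcs r, #(cyclicApexes r p)) := by
        rw [card_apexPairs, ← sum_add_distrib]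
        congr 1
        refine sum_congr rfl fun p _ => ?_
        rw [offDiag_card, sq, Nat.sub_add_cancel (Nat.le_mul_self _)]
    _ ≤ n.choose 2 * (2 * cyc4Count r + n.choose 2 * n) :=
        Nat.mul_le_mul (card_arcs_le hr) (Nat.add_le_add (card_apexPairs_le hr) hsum)

lemma nine_mul_cyc3Count_sq_le (hr : IsTournament r) :
    9 * cyc3Count r ^ 2 ≤ n.choose 2 * (2 * cyc4Count r + n.choose 2 * n) :=
  calc 9 * cyc3Count r ^ 2 = (3 * cyc3Count r) ^ 2 := by ring
    _ ≤ (∑ p ∈ arcs r, #(cyclicApexes r p)) ^ 2 := Nat.pow_le_pow_left three_mul_cyc3Count_le 2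
    _ ≤ _ := sq_sum_card_cyclicApexes_le hr

lemma cast_choose_three {n : ℕ} (hn : 2 ≤ n) :
    (n.choose 3 : ℝ) = n.choose 2 * (n - 2) / 3 := by
  rw [eq_div_iff three_ne_zero]
  exact_mod_cast Nat.choose_succ_right_eq n 2

lemma cast_choose_four {n : ℕ} (hn : 3 ≤ n) :
    (n.choose 4 : ℝ) = n.choose 2 * (n - 2) * (n - 3) / 12 := by
  have h : (n.choose 4 : ℝ) * 4 = n.choose 3 * (n - 3) := by
    exact_mod_cast Nat.choose_succ_right_eq n 3
  rw [cast_choose_three (by omega)] at h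
  linear_combination h / 4

lemma le_density_of_sq_le {n b x y : ℝ} (hn : 4 ≤ n) (hb : 0 < b) (hy : 0 ≤ y)
    (h : 9 * x ^ 2 ≤ b * (2 * y + b * n)) :
    6 * (x / (b * (n - 2) / 3)) ^ 2 - 24 / n ≤ y / (b * (n - 2) * (n - 3) / 12) := by
  have hn2 : 0 < n - 2 := by linarith
  have hn3 : 0 < n - 3 := by linarith
  have hmain : 12 * y / (b * (n - 2) ^ 2) ≤ 12 * y / (b * (n - 2) * (n - 3)) := by
    rw [sq, ← mul_assoc]
    gcongr
    linarith
  have herror : 6 * n / (n - 2) ^ 2 ≤ 24 / n := by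
    rw [div_le_div_iff₀ (by positivity) (by positivity)]
    nlinarith
  calc 6 * (x / (b * (n - 2) / 3)) ^ 2 - 24 / n
      = 6 * (9 * x ^ 2) / (b * (n - 2)) ^ 2 - 24 / n := by
        field_simp
        ring
    _ ≤ 6 * (b * (2 * y + b * n)) / (b * (n - 2)) ^ 2 - 24 / n := by gcongr
    _ = 12 * y / (b * (n - 2) ^ 2) + 6 * n / (n - 2) ^ 2 - 24 / n := by
        field_simp
        ring
    _ ≤ 12 * y / (b * (n - 2) * (n - 3)) := by linarith
    _ = y / (b * (n - 2) * (n - 3) / 12) := by field_simp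

/-- for every `ε > 0` there is `N` such that every tournament on
`n ≥ N` vertices satisfies `c4 ≥ 6·c3² − ε`. -/
theorem stmt_8 :
    ∀ ε : ℝ, 0 < ε → ∃ N : ℕ, ∀ n : ℕ, N ≤ n → ∀ r : Fin n → Fin n → Prop,
      IsTournament r →
        (cyc4Count r : ℝ) / (n.choose 4 : ℝ) ≥
          6 * ((cyc3Count r : ℝ) / (n.choose 3 : ℝ)) ^ 2 - ε := by
  intro ε hε
  obtain ⟨N, hN⟩ := exists_nat_gt (24 / ε)
  refine ⟨max 4 N, fun n hn r hr => ?_⟩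
  have hn4 : 4 ≤ n := le_of_max_le_left hn
  have hb : (0 : ℝ) < n.choose 2 := by exact_mod_cast Nat.choose_pos (by omega)
  have hcount : 9 * (cyc3Count r : ℝ) ^ 2 ≤ n.choose 2 * (2 * cyc4Count r + n.choose 2 * n) := by
    exact_mod_cast nine_mul_cyc3Count_sq_le hr
  have herror : 24 / (n : ℝ) ≤ ε := by
    have hNn : (N : ℝ) ≤ n := by exact_mod_cast le_of_max_le_right hn
    rw [div_le_iff₀ (by positivity)]
    linarith [(div_lt_iff₀ hε).1 (hN.trans_le hNn)]
  rw [cast_choose_three (by omega), cast_choose_four (by omega)]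
  linarith [le_density_of_sq_le (by exact_mod_cast hn4) hb (by positivity) hcount]
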